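/- Let n ≥ 1 be an integer and λ ∈ ℝ with λ > 0, and set μ := √(n² + λ). Then ∫₀¹ ψ₁(λ,ρ) · ρ^{2n}/√(1−ρ²) dρ = 0 if and only if there exists a positive integer m such that λ = 2m(2m + 2n). In particular, the eigenvalues of the radial closed eigenvalue problem arising from even (symmetric) solutions are exactly λ_{2m} = 2m(2m + 2n), m ≥ 1. -/

import Mathlib

open Set Filter
open scoped Topology Real

/-- Pochhammer symbol `(d)_k = d(d+1)⋯(d+k−1)` over the reals. -/
noncomputable def poch (d : ℝ) (k : ℕ) : ℝ := Polynomial.eval d (ascPochhammer ℝ k)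

/-- The `k`-th coefficient `(a)_k (b)_k / (k! (c)_k)` of the Gauss hypergeometric series. -/
noncomputable def hypCoeff (a b c : ℝ) (k : ℕ) : ℝ :=
  poch a k * poch b k / ((k.factorial : ℝ) * poch c k)

/-- The Gauss hypergeometric series `F(a,b,c,x) = Σ_k ((a)_k (b)_k / (k! (c)_k)) x^k`. -/
noncomputable def hypF (a b c x : ℝ) : ℝ := ∑' k : ℕ, hypCoeff a b c k * x ^ k

/-- The first hypergeometric solution
`ψ₁(λ,ρ) = F((n−μ)/2, (n+μ)/2, n + 1/2, ρ²)` with `μ = √(n² + λ)`. -/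
noncomputable def psi1 (n : ℕ) (lam ρ : ℝ) : ℝ :=
  hypF (((n : ℝ) - Real.sqrt ((n : ℝ) ^ 2 + lam)) / 2)
    (((n : ℝ) + Real.sqrt ((n : ℝ) ^ 2 + lam)) / 2) ((n : ℝ) + 1 / 2) (ρ ^ 2)

/-- The second hypergeometric solution
`ψ₂(λ,ρ) = ρ^{1−2n} F((1−n−μ)/2, (1−n+μ)/2, 3/2 − n, ρ²)` with `μ = √(n² + λ)`. -/
noncomputable def psi2 (n : ℕ) (lam ρ : ℝ) : ℝ :=
  hypF ((1 - (n : ℝ) - Real.sqrt ((n : ℝ) ^ 2 + lam)) / 2)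
    ((1 - (n : ℝ) + Real.sqrt ((n : ℝ) ^ 2 + lam)) / 2) (3 / 2 - (n : ℝ)) (ρ ^ 2)
    / ρ ^ (2 * n - 1)

/-- The radial equation
`(1−ρ²)·φ''(ρ) + ((2n − (2n+1)ρ²)/ρ)·φ'(ρ) = −λ·φ(ρ)` at the point `ρ`. -/
def RadialEq (n : ℕ) (lam : ℝ) (φ : ℝ → ℝ) (ρ : ℝ) : Prop :=
  (1 - ρ ^ 2) * deriv (deriv φ) ρ
    + ((2 * (n : ℝ) - (2 * (n : ℝ) + 1) * ρ ^ 2) / ρ) * deriv φ ρ = -lam * φ ρ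

/-!
Expanding `ψ₁` termwise, the `k`-th term carries the moment `J_{n+k}` of
`J_s := ∫₀¹ ρ^{2s}/√(1-ρ²)`, and `J_{s+1} = (2s+1)/(2s+2) · J_s` turns the lower parameter
`n + 1/2` into `n + 1`: the integral is `J_n · F(a, b; a + b + 1; 1)` with `a + b = n` and
`ab = -λ/4`. For this lower parameter the partial sums of the series telescope to
`∏_{j<N} (1 + ab/((j+1)(a+b+1+j)))`, so
`F(a, b; a + b + 1; 1) = ∏_{j ≥ 1} (1 - λ/(4j(j+n)))`, an absolutely convergent product, which
vanishes iff one of its factors does, i.e. iff `λ = 4m(m+n)`.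
-/

open MeasureTheory Finset

theorem poch_eq_prod (d : ℝ) (k : ℕ) : poch d k = ∏ j ∈ range k, (d + j) := by
  induction k with
  | zero => simp [poch]
  | succ k ih => rw [prod_range_succ, ← ih]; simp [poch, ascPochhammer_succ_eval]

theorem poch_succ_eq_mul_poch_add_one (d : ℝ) (k : ℕ) :
    poch d (k + 1) = d * poch (d + 1) k := by
  rw [poch_eq_prod, poch_eq_prod, prod_range_succ', mul_comm]
  push_cast
  simp only [add_zero, add_assoc, add_comm (1 : ℝ)]

theorem hypCoeff_eq_prod (a b c : ℝ) (k : ℕ) :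
    hypCoeff a b c k = ∏ j ∈ range k, (a + j) * (b + j) / ((j + 1) * (c + j)) := by
  have hfact : (k.factorial : ℝ) = ∏ j ∈ range k, ((j : ℝ) + 1) := by
    rw [← prod_range_add_one_eq_factorial]; push_cast; rfl
  rw [hypCoeff, poch_eq_prod, poch_eq_prod, poch_eq_prod, hfact, prod_div_distrib,
    prod_mul_distrib, prod_mul_distrib]

theorem hypCoeff_succ (a b c : ℝ) (k : ℕ) :
    hypCoeff a b c (k + 1) = hypCoeff a b c k * ((a + k) * (b + k) / ((k + 1) * (c + k))) := by
  rw [hypCoeff_eq_prod, hypCoeff_eq_prod, prod_range_succ]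

theorem hypCoeff_succ_eq_hypCoeff_add_one (a b c : ℝ) (k : ℕ) :
    hypCoeff a b c (k + 1) = hypCoeff (a + 1) (b + 1) c k * (a * b / ((k + 1) * (c + k))) := by
  rw [hypCoeff, hypCoeff, poch_succ_eq_mul_poch_add_one, poch_succ_eq_mul_poch_add_one,
    poch_eq_prod c (k + 1), prod_range_succ, ← poch_eq_prod, Nat.factorial_succ, div_mul_div_comm]
  push_cast
  congr 1 <;> ring

theorem hypCoeff_add_one_eq_prod (a b : ℝ) (hc : 0 < a + b + 1) (k : ℕ) :
    hypCoeff (a + 1) (b + 1) (a + b + 1) k =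
      ∏ j ∈ range k, (1 + a * b / ((j + 1) * (a + b + 1 + j))) := by
  rw [hypCoeff_eq_prod]
  refine prod_congr rfl fun j _ => ?_
  have : ((j : ℝ) + 1) * (a + b + 1 + j) ≠ 0 := by positivity
  field_simp
  ring

theorem sum_range_succ_hypCoeff (a b : ℝ) (hc : 0 < a + b + 1) (N : ℕ) :
    ∑ k ∈ range (N + 1), hypCoeff a b (a + b + 1) k =
      ∏ j ∈ range N, (1 + a * b / ((j + 1) * (a + b + 1 + j))) := by
  induction N with
  | zero => simp [hypCoeff_eq_prod]
  | succ N ih =>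
    rw [sum_range_succ, ih, hypCoeff_succ_eq_hypCoeff_add_one, hypCoeff_add_one_eq_prod a b hc,
      prod_range_succ]
    ring

theorem summable_abs_of_sum_range_succ_eq_prod {u c : ℕ → ℝ} (hc : Summable c)
    (hu : ∀ N, ∑ k ∈ range (N + 1), u k = ∏ j ∈ range N, (1 + c j)) :
    Summable fun k => |u k| := by
  obtain ⟨B, hB⟩ := isBounded_iff_forall_norm_le.1 <| Metric.isBounded_range_of_tendsto _
    (Real.multipliable_one_add_of_summable hc).hasProd.tendsto_prod_nat
  have hstep : ∀ k, u (k + 1) = (∏ j ∈ range k, (1 + c j)) * c k := by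
    intro k
    have h := hu (k + 1)
    rw [sum_range_succ, hu k, prod_range_succ] at h
    linear_combination h
  refine (summable_nat_add_iff 1).1 <|
    (hc.abs.mul_left B).of_nonneg_of_le (fun _ => abs_nonneg _) fun k => ?_
  rw [hstep, abs_mul]
  exact mul_le_mul_of_nonneg_right (hB _ ⟨k, rfl⟩) (abs_nonneg _)

theorem hasSum_tprod_of_sum_range_succ_eq_prod {u c : ℕ → ℝ} (hc : Summable c)
    (hu : ∀ N, ∑ k ∈ range (N + 1), u k = ∏ j ∈ range N, (1 + c j)) :
    HasSum u (∏' j, (1 + c j)) := by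
  have hs := (summable_abs_of_sum_range_succ_eq_prod hc hu).of_abs
  have hpartial : Tendsto (fun N => ∏ j ∈ range N, (1 + c j)) atTop (𝓝 (∑' k, u k)) := by
    simpa only [Function.comp_def, hu] using
      hs.hasSum.tendsto_sum_nat.comp (tendsto_add_atTop_nat 1)
  rw [tendsto_nhds_unique (Real.multipliable_one_add_of_summable hc).hasProd.tendsto_prod_nat
    hpartial]
  exact hs.hasSum

theorem tprod_one_add_eq_zero_iff {ι R : Type*} [NormedCommRing R] [NormOneClass R]
    [CompleteSpace R] [NormMulClass R] {f : ι → R} (hf : Summable fun i => ‖f i‖) :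
    ∏' i, (1 + f i) = 0 ↔ ∃ i, 1 + f i = 0 := by
  refine ⟨fun h => ?_, tprod_of_exists_eq_zero⟩
  by_contra! hne
  exact tprod_one_add_ne_zero_of_summable hne hf h

theorem summable_div_succ_mul_add (x : ℝ) {c : ℝ} (hc : 0 < c) :
    Summable fun j : ℕ => x / ((j + 1) * (c + j)) := by
  set m := min c 1
  have hm : 0 < m := lt_min hc one_pos
  have hsq : Summable fun j : ℕ => 1 / ((j : ℝ) + 1) ^ 2 := by
    simpa using (summable_nat_add_iff 1).2 (Real.summable_one_div_nat_pow.2 one_lt_two)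
  refine .of_norm_bounded (hsq.mul_left (|x| / m)) fun j => ?_
  have hj : (0 : ℝ) ≤ j := j.cast_nonneg
  have hlow : m * (j + 1) ≤ c + j := by
    nlinarith [min_le_left c 1, min_le_right c 1]
  have hden : 0 < ((j : ℝ) + 1) * (c + j) := by positivity
  rw [Real.norm_eq_abs, abs_div, abs_of_pos hden, div_mul_div_comm, mul_one]
  refine div_le_div_of_nonneg_left (abs_nonneg x) (by positivity) ?_
  nlinarith

theorem summable_abs_hypCoeff (a b : ℝ) (hc : 0 < a + b + 1) :
    Summable fun k => |hypCoeff a b (a + b + 1) k| :=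
  summable_abs_of_sum_range_succ_eq_prod (summable_div_succ_mul_add _ hc)
    (sum_range_succ_hypCoeff a b hc)

theorem hypF_one_eq_tprod (a b : ℝ) (hc : 0 < a + b + 1) :
    hypF a b (a + b + 1) 1 = ∏' j : ℕ, (1 + a * b / ((j + 1) * (a + b + 1 + j))) := by
  simpa [hypF] using (hasSum_tprod_of_sum_range_succ_eq_prod (summable_div_succ_mul_add _ hc)
    (sum_range_succ_hypCoeff a b hc)).tsum_eq

noncomputable def weightMoment (s : ℕ) : ℝ := ∫ ρ in (0 : ℝ)..1, ρ ^ (2 * s) / √(1 - ρ ^ 2)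

theorem intervalIntegrable_pow_div_sqrt_one_sub_sq (k : ℕ) :
    IntervalIntegrable (fun ρ : ℝ => ρ ^ k / √(1 - ρ ^ 2)) volume 0 1 := by
  have harcsin : IntegrableOn (fun ρ : ℝ => 1 / √(1 - ρ ^ 2)) (Ioc 0 1) :=
    intervalIntegral.integrableOn_deriv_of_nonneg Real.continuous_arcsin.continuousOn
      (fun x hx => Real.hasDerivAt_arcsin (by linarith [hx.1]) hx.2.ne) fun x _ => by positivity
  refine (intervalIntegrable_iff_integrableOn_Ioc_of_le zero_le_one).2 (harcsin.mono' ?_ ?_)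
  · exact ((measurable_id.pow_const k).div (by fun_prop)).aestronglyMeasurable
  · filter_upwards [ae_restrict_mem measurableSet_Ioc] with ρ hρ
    rw [Real.norm_eq_abs, abs_of_nonneg (by have := hρ.1; positivity)]
    exact div_le_div_of_nonneg_right (pow_le_one₀ hρ.1.le hρ.2) (Real.sqrt_nonneg _)

theorem weightMoment_pos (s : ℕ) : 0 < weightMoment s := by
  refine intervalIntegral.intervalIntegral_pos_of_pos_on
    (intervalIntegrable_pow_div_sqrt_one_sub_sq _) (fun x hx => ?_) zero_lt_one
  have := hx.1
  have : 0 < 1 - x ^ 2 := by nlinarith [hx.2]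
  positivity

theorem weightMoment_succ (s : ℕ) :
    weightMoment (s + 1) = (2 * s + 1) / (2 * s + 2) * weightMoment s := by
  have hderiv : ∀ x ∈ Ioo (0 : ℝ) 1, HasDerivAt (fun ρ => ρ ^ (2 * s + 1) * √(1 - ρ ^ 2))
      ((2 * s + 1) * (x ^ (2 * s) / √(1 - x ^ 2))
        - (2 * s + 2) * (x ^ (2 * (s + 1)) / √(1 - x ^ 2))) x := by
    intro x hx
    have hpos : 0 < 1 - x ^ 2 := by nlinarith [hx.1, hx.2]
    refine ((hasDerivAt_pow (2 * s + 1) x).mul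
      (((hasDerivAt_pow 2 x).const_sub 1).sqrt hpos.ne')).congr_deriv ?_
    have hsq := Real.sq_sqrt hpos.le
    have hne := (Real.sqrt_pos.2 hpos).ne'
    simp only [Nat.add_sub_cancel]
    push_cast
    field_simp
    rw [hsq]
    ring
  have hftc := intervalIntegral.integral_eq_sub_of_hasDerivAt_of_le zero_le_one
    (by fun_prop) hderiv
    (((intervalIntegrable_pow_div_sqrt_one_sub_sq _).const_mul _).sub
      ((intervalIntegrable_pow_div_sqrt_one_sub_sq _).const_mul _))
  rw [intervalIntegral.integral_sub ((intervalIntegrable_pow_div_sqrt_one_sub_sq _).const_mul _)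
    ((intervalIntegrable_pow_div_sqrt_one_sub_sq _).const_mul _),
    intervalIntegral.integral_const_mul, intervalIntegral.integral_const_mul] at hftc
  simp only [one_pow, sub_self, Real.sqrt_zero, mul_zero, ne_eq, add_eq_zero, one_ne_zero,
    and_false, not_false_eq_true, zero_pow, zero_mul] at hftc
  rw [weightMoment, weightMoment, div_mul_eq_mul_div, eq_div_iff (by positivity)]
  linarith

theorem hypCoeff_mul_weightMoment (a b : ℝ) (s k : ℕ) :
    hypCoeff a b (s + 1 / 2) k * weightMoment (s + k) =
      weightMoment s * hypCoeff a b (s + 1) k := by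
  induction k with
  | zero => simp [hypCoeff_eq_prod]
  | succ k ih =>
    have hratio : (a + k) * (b + k) / ((k + 1) * (s + 1 / 2 + k)) *
        ((2 * ((s + k : ℕ) : ℝ) + 1) / (2 * ((s + k : ℕ) : ℝ) + 2)) =
          (a + k) * (b + k) / ((k + 1) * (s + 1 + k)) := by
      push_cast
      field_simp
      ring
    rw [hypCoeff_succ, hypCoeff_succ, ← add_assoc, weightMoment_succ, ← hratio,
      ← mul_assoc (weightMoment s), ← ih]
    ring

theorem integral_hypF_sq_mul_weight (a b : ℝ) (n : ℕ)
    (hsum : Summable fun k => |hypCoeff a b (n + 1) k|) :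
    ∫ ρ in (0 : ℝ)..1, hypF a b (n + 1 / 2) (ρ ^ 2) * ρ ^ (2 * n) / √(1 - ρ ^ 2) =
      weightMoment n * hypF a b (n + 1) 1 := by
  set F : ℕ → ℝ → ℝ := fun k ρ =>
    hypCoeff a b (n + 1 / 2) k * (ρ ^ (2 * (n + k)) / √(1 - ρ ^ 2))
  have hF_int : ∀ k, IntervalIntegrable (F k) volume 0 1 := fun k =>
    (intervalIntegrable_pow_div_sqrt_one_sub_sq _).const_mul _
  have hF : ∀ k, ∫ ρ in (0 : ℝ)..1, F k ρ = weightMoment n * hypCoeff a b (n + 1) k := by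
    intro k
    rw [intervalIntegral.integral_const_mul]
    exact hypCoeff_mul_weightMoment a b n k
  have hF_norm :
      ∀ k, ∫ ρ in Ioc (0 : ℝ) 1, ‖F k ρ‖ = weightMoment n * |hypCoeff a b (n + 1) k| := by
    intro k
    have hnorm :
        ∀ ρ, ‖F k ρ‖ = |hypCoeff a b (n + 1 / 2) k| * (ρ ^ (2 * (n + k)) / √(1 - ρ ^ 2)) :=
      fun ρ => by rw [norm_mul, Real.norm_eq_abs, Real.norm_of_nonneg
        (div_nonneg ((even_two_mul _).pow_nonneg ρ) (Real.sqrt_nonneg _))]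
    simp_rw [hnorm, integral_const_mul, ← intervalIntegral.integral_of_le zero_le_one]
    rw [← weightMoment, ← abs_of_pos (weightMoment_pos (n + k)), ← abs_mul,
      hypCoeff_mul_weightMoment, abs_mul, abs_of_pos (weightMoment_pos n)]
  have hseries :
      ∀ ρ, hypF a b (n + 1 / 2) (ρ ^ 2) * ρ ^ (2 * n) / √(1 - ρ ^ 2) = ∑' k, F k ρ := by
    intro ρ
    rw [hypF, ← tsum_mul_right, ← tsum_div_const]
    refine tsum_congr fun k => ?_
    simp only [F, mul_add, pow_add, pow_mul]
    ring
  simp_rw [hseries, intervalIntegral.integral_of_le zero_le_one]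
  rw [← integral_tsum_of_summable_integral_norm (fun k => (hF_int k).1) ?_]
  · simp_rw [← intervalIntegral.integral_of_le zero_le_one, hF]
    rw [tsum_mul_left, hypF]
    simp
  · simpa only [hF_norm] using hsum.mul_left (weightMoment n)

theorem exists_one_add_neg_div_eq_zero_iff (n : ℕ) (lam : ℝ) :
    (∃ j : ℕ, 1 + -lam / 4 / ((j + 1) * (n + 1 + j)) = 0) ↔
      ∃ m : ℕ, 1 ≤ m ∧ lam = 2 * (m : ℝ) * (2 * (m : ℝ) + 2 * (n : ℝ)) := by
  constructor
  · rintro ⟨j, hj⟩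
    refine ⟨j + 1, by omega, ?_⟩
    have : ((j : ℝ) + 1) * (n + 1 + j) ≠ 0 := by positivity
    field_simp at hj
    push_cast
    linarith
  · rintro ⟨m, hm, rfl⟩
    refine ⟨m - 1, ?_⟩
    have hden : (((m - 1 : ℕ) : ℝ) + 1) * (n + 1 + ((m - 1 : ℕ) : ℝ)) = m * (n + m) := by
      rw [Nat.cast_sub hm]
      push_cast
      ring
    have : (m : ℝ) * (n + m) ≠ 0 := by positivity
    rw [hden]
    field_simp
    ring

theorem psi1_weighted_integral_eq_zero_iff_general (n : ℕ) (lam : ℝ)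
    (hlam : 0 < lam) :
    (∫ ρ in (0 : ℝ)..1, psi1 n lam ρ * ρ ^ (2 * n) / Real.sqrt (1 - ρ ^ 2)) = 0 ↔
      ∃ m : ℕ, 1 ≤ m ∧ lam = 2 * (m : ℝ) * (2 * (m : ℝ) + 2 * (n : ℝ)) := by
  set a := ((n : ℝ) - √((n : ℝ) ^ 2 + lam)) / 2
  set b := ((n : ℝ) + √((n : ℝ) ^ 2 + lam)) / 2
  have hc : a + b + 1 = n + 1 := by ring
  have hc_pos : 0 < a + b + 1 := by rw [hc]; positivity
  have hab : a * b = -lam / 4 := by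
    linear_combination (-1 / 4 : ℝ) * Real.sq_sqrt (by positivity : (0 : ℝ) ≤ n ^ 2 + lam)
  have hint := integral_hypF_sq_mul_weight a b n (hc ▸ summable_abs_hypCoeff a b hc_pos)
  rw [← hc, hypF_one_eq_tprod a b hc_pos] at hint
  rw [show psi1 n lam = fun ρ => hypF a b (n + 1 / 2) (ρ ^ 2) from rfl, hint, mul_eq_zero,
    or_iff_right (weightMoment_pos n).ne',
    tprod_one_add_eq_zero_iff (summable_div_succ_mul_add _ hc_pos).norm, hab, hc,
    ← exists_one_add_neg_div_eq_zero_iff]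

/-- the weighted integral of `ψ₁(λ,·)` vanishes iff `λ = 2m(2m+2n)`
for some positive integer `m`. -/
theorem psi1_weighted_integral_eq_zero_iff (n : ℕ) (hn : 1 ≤ n) (lam : ℝ)
    (hlam : 0 < lam) :
    (∫ ρ in (0 : ℝ)..1, psi1 n lam ρ * ρ ^ (2 * n) / Real.sqrt (1 - ρ ^ 2)) = 0 ↔
      ∃ m : ℕ, 1 ≤ m ∧ lam = 2 * (m : ℝ) * (2 * (m : ℝ) + 2 * (n : ℝ)) :=
  psi1_weighted_integral_eq_zero_iff_general n lam hlam
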